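/- arXiv:2009.10984 — 2 statements merged into one kernel-verified Lean document; each statement's English description precedes it below -/
import Mathlib

section
/- Let 𝒜 be a finite set of linear maps on ℝⁿ and X a compact convex set containing the origin in its interior. Suppose there exists k ≥ 0 such that A_w(X) ⊆ X for every word w over 𝒜 of length exactly k+1. Then the iteration R₀ = X, R_{k+1} = conv(R_k ∪ ⋃_{A ∈ 𝒜} A(R_k)) satisfies R_{k+1} = R_k, i.e., it terminates in finitely many steps. -/
/-!
By induction on `j`, for every word `w` with `j + |w| ≤ k + 1` one has `A_w(R_j) ⊆ R_k`:
for `j = 0` either `|w| = k + 1` and `A_w(X) ⊆ X ⊆ R_k`, or `A_w(X) ⊆ R_{|w|} ⊆ R_k`; for `j + 1`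
the preimage `A_w⁻¹(R_k)` is convex and contains `R_j` and each `A_σ(R_j)` (apply the induction
hypothesis to `w` and to `w σ`), hence contains `R_{j+1}`. The empty word with `j = k + 1`
gives `R_{k+1} ⊆ R_k`.
-/

open Set

section ReachStep

variable (𝕜 : Type*) {E ι : Type*} [Semiring 𝕜] [PartialOrder 𝕜] [AddCommMonoid E] [Module 𝕜 E]

def reachStep (A : ι → Module.End 𝕜 E) (S : Set E) : Set E :=
  convexHull 𝕜 (S ∪ ⋃ σ, A σ '' S)

variable {𝕜} {A : ι → Module.End 𝕜 E} {S T : Set E}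

theorem subset_reachStep : S ⊆ reachStep 𝕜 A S :=
  subset_union_left.trans (subset_convexHull 𝕜 _)

theorem image_subset_reachStep (σ : ι) : A σ '' S ⊆ reachStep 𝕜 A S :=
  ((subset_iUnion (fun σ => A σ '' S) σ).trans subset_union_right).trans (subset_convexHull 𝕜 _)

theorem convex_reachStep : Convex 𝕜 (reachStep 𝕜 A S) :=
  convex_convexHull 𝕜 _

theorem reachStep_subset (hT : Convex 𝕜 T) (hST : S ⊆ T) (hAT : ∀ σ, A σ '' S ⊆ T) :
    reachStep 𝕜 A S ⊆ T :=
  convexHull_min (union_subset hST (iUnion_subset hAT)) hT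

end ReachStep

section Words

variable {R E ι : Type*} [Semiring R] [AddCommMonoid E] [Module R E]

/-- `wordMap A [σₖ, …, σ₀] = A σₖ ∘ ⋯ ∘ A σ₀`. -/
def wordMap (A : ι → Module.End R E) (w : List ι) : Module.End R E :=
  (w.map A).prod

variable (A : ι → Module.End R E)

@[simp]
theorem wordMap_nil : wordMap A [] = 1 := rfl

@[simp]
theorem wordMap_cons (σ : ι) (w : List ι) : wordMap A (σ :: w) = A σ * wordMap A w := by
  simp [wordMap]

@[simp]
theorem wordMap_concat (w : List ι) (σ : ι) : wordMap A (w ++ [σ]) = wordMap A w * A σ := by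
  simp [wordMap]

end Words

section Iteration

variable {𝕜 E ι : Type*} [Semiring 𝕜] [PartialOrder 𝕜] [AddCommMonoid E] [Module 𝕜 E]
  {A : ι → Module.End 𝕜 E} {R : ℕ → Set E}

theorem monotone_of_reachStep (hR : ∀ j, R (j + 1) = reachStep 𝕜 A (R j)) : Monotone R :=
  monotone_nat_of_le_succ fun j => (hR j).symm ▸ subset_reachStep

theorem convex_of_reachStep (hR : ∀ j, R (j + 1) = reachStep 𝕜 A (R j)) (hconv : Convex 𝕜 (R 0)) :
    ∀ j, Convex 𝕜 (R j)
  | 0 => hconv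
  | j + 1 => (hR j).symm ▸ convex_reachStep

theorem image_wordMap_subset_of_reachStep (hR : ∀ j, R (j + 1) = reachStep 𝕜 A (R j)) (j : ℕ) :
    ∀ w : List ι, wordMap A w '' R j ⊆ R (j + w.length)
  | [] => by simp
  | σ :: w => by
    rw [wordMap_cons, Module.End.coe_mul, image_comp, List.length_cons, ← add_assoc, hR]
    exact (image_mono (image_wordMap_subset_of_reachStep hR j w)).trans
      (image_subset_reachStep σ)

theorem image_wordMap_subset_of_forall_length_eq (hR : ∀ j, R (j + 1) = reachStep 𝕜 A (R j))
    (hconv : Convex 𝕜 (R 0)) {k : ℕ}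
    (hw : ∀ w : List ι, w.length = k + 1 → wordMap A w '' R 0 ⊆ R 0) :
    ∀ j (w : List ι), j + w.length ≤ k + 1 → wordMap A w '' R j ⊆ R k := by
  have hmono := monotone_of_reachStep hR
  intro j
  induction j with
  | zero =>
    intro w hw_len
    rw [zero_add] at hw_len
    rcases hw_len.eq_or_lt with hlen | hlen
    · exact (hw w hlen).trans (hmono (Nat.zero_le k))
    · exact (image_wordMap_subset_of_reachStep hR 0 w).trans (hmono (by omega))
  | succ j ih =>
    intro w hw_len
    rw [image_subset_iff, hR]
    refine reachStep_subset ((convex_of_reachStep hR hconv k).linear_preimage _)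
      (image_subset_iff.mp (ih w (by omega))) fun σ => ?_
    have h := ih (w ++ [σ]) (by rw [List.length_append, List.length_singleton]; omega)
    rwa [wordMap_concat, Module.End.coe_mul, image_comp, image_subset_iff] at h

end Iteration

theorem stmt_5_general {n M : ℕ} (A : Fin M → Module.End ℝ (EuclideanSpace ℝ (Fin n)))
    (X : Set (EuclideanSpace ℝ (Fin n)))
    (hXconv : Convex ℝ X)
    (R : ℕ → Set (EuclideanSpace ℝ (Fin n)))
    (hR0 : R 0 = X)
    (hR : ∀ j, R (j + 1) = convexHull ℝ (R j ∪ ⋃ σ : Fin M, (A σ) '' R j))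
    (k : ℕ)
    (hw : ∀ w : Fin (k + 1) → Fin M, ((List.ofFn fun i => A (w i)).prod) '' X ⊆ X) :
    R (k + 1) = R k := by
  subst hR0
  have hwords : ∀ w : List (Fin M), w.length = k + 1 → wordMap A w '' R 0 ⊆ R 0 := by
    intro w hlen
    have h := hw fun i => w[(Fin.cast hlen.symm i : ℕ)]
    rwa [← List.ofFn_congr hlen fun i => A w[(i : ℕ)], List.ofFn_getElem_eq_map] at h
  have hstable := image_wordMap_subset_of_forall_length_eq hR hXconv hwords (k + 1) [] le_rfl
  rw [wordMap_nil, Module.End.one_eq_id, LinearMap.id_coe, image_id] at hstable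
  exact hstable.antisymm (monotone_of_reachStep hR k.le_succ)

theorem stmt_5 {n M : ℕ} (A : Fin M → Module.End ℝ (EuclideanSpace ℝ (Fin n)))
    (X : Set (EuclideanSpace ℝ (Fin n)))
    (hXconv : Convex ℝ X) (hXcomp : IsCompact X)
    (h0 : (0 : EuclideanSpace ℝ (Fin n)) ∈ interior X)
    (R : ℕ → Set (EuclideanSpace ℝ (Fin n)))
    (hR0 : R 0 = X)
    (hR : ∀ j, R (j + 1) = convexHull ℝ (R j ∪ ⋃ σ : Fin M, (A σ) '' R j))
    (k : ℕ)
    (hw : ∀ w : Fin (k + 1) → Fin M, ((List.ofFn fun i => A (w i)).prod) '' X ⊆ X) :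
    R (k + 1) = R k :=
  stmt_5_general A X hXconv R hR0 hR k hw
end

section
/- Let S ⊆ ℝⁿ be a convex body containing 0 in its interior, 𝒜 a finite set of linear maps, and let S̃ = {x on the unit sphere : ‖Ax‖_S ≤ ‖x‖_S for all A ∈ 𝒜}. Let K = conv({x ∈ S : x/‖x‖ ∈ S̃}) and suppose α > 0 satisfies αS ⊆ K. Then S is a (1/α)-contractive set, i.e., for every x ∈ S and A ∈ 𝒜, Ax ∈ (1/α)S. -/
open Pointwise

theorem stmt_9 {n : ℕ} (S : Set (EuclideanSpace ℝ (Fin n)))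
    (hconv : Convex ℝ S) (hcomp : IsCompact S)
    (h0 : (0 : EuclideanSpace ℝ (Fin n)) ∈ interior S)
    (𝒜 : Finset (Module.End ℝ (EuclideanSpace ℝ (Fin n))))
    (α : ℝ) (hα : 0 < α)
    (hK : α • S ⊆ convexHull ℝ
      {x ∈ S | ‖(‖x‖⁻¹ • x)‖ = 1 ∧
        ∀ A ∈ 𝒜, gauge S (A (‖x‖⁻¹ • x)) ≤ gauge S (‖x‖⁻¹ • x)}) :
    ∀ x ∈ S, ∀ A ∈ 𝒜, A x ∈ α⁻¹ • S := by
  intro x hx A hA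
  have hS0 : S ∈ nhds (0 : EuclideanSpace ℝ (Fin n)) :=
    mem_interior_iff_mem_nhds.mp h0
  have hclosed : closure S = S := hcomp.isClosed.closure_eq
  -- every element of the generating set maps into S
  have hT : ∀ y ∈ {x ∈ S | ‖(‖x‖⁻¹ • x)‖ = 1 ∧
      ∀ A ∈ 𝒜, gauge S (A (‖x‖⁻¹ • x)) ≤ gauge S (‖x‖⁻¹ • x)}, A y ∈ S := by
    rintro y ⟨hyS, hy1, hy2⟩
    have hy0 : y ≠ 0 := by
      rintro rfl; simp at hy1
    have hny : (0:ℝ) < ‖y‖ := norm_pos_iff.mpr hy0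
    have key : gauge S (A y) ≤ 1 := by
      have h1 : gauge S (A y) = ‖y‖ * gauge S (A (‖y‖⁻¹ • y)) := by
        rw [map_smul, gauge_smul_of_nonneg (inv_nonneg.mpr hny.le), smul_eq_mul,
          ← mul_assoc, mul_inv_cancel₀ hny.ne', one_mul]
      have h2 : ‖y‖ * gauge S (‖y‖⁻¹ • y) = gauge S y := by
        rw [gauge_smul_of_nonneg (inv_nonneg.mpr hny.le), smul_eq_mul,
          ← mul_assoc, mul_inv_cancel₀ hny.ne', one_mul]
      calc gauge S (A y) = ‖y‖ * gauge S (A (‖y‖⁻¹ • y)) := h1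
        _ ≤ ‖y‖ * gauge S (‖y‖⁻¹ • y) := by
            exact mul_le_mul_of_nonneg_left (hy2 A hA) hny.le
        _ = gauge S y := h2
        _ ≤ 1 := gauge_le_one_of_mem hyS
    have := (gauge_le_one_iff_mem_closure hconv hS0).mp key
    rwa [hclosed] at this
  -- αx lands in convexHull T, push through A
  have hmem : α • x ∈ convexHull ℝ _ := hK (Set.smul_mem_smul_set hx)
  have himg : A (α • x) ∈ A '' (convexHull ℝ _) := Set.mem_image_of_mem _ hmem
  rw [A.image_convexHull] at himg
  have hsub : convexHull ℝ (A '' _) ⊆ S := convexHull_min (by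
    rintro _ ⟨y, hy, rfl⟩; exact hT y hy) hconv
  have hAS : α • A x ∈ S := by
    have := hsub himg
    rwa [map_smul] at this
  have : A x = α⁻¹ • (α • A x) := by
    rw [smul_smul, inv_mul_cancel₀ hα.ne', one_smul]
  rw [this]
  exact Set.smul_mem_smul_set hAS
end
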